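/- arXiv:1208.4081 — 4 statements merged into one kernel-verified Lean document; each statement's English description precedes it below -/
import Mathlib

section
/- Superadditivity of anisotropy with respect to partitioning: if f is a joint probability density on ℝ^{ℓ₁} × ℝ^{ℓ₂} with finite positive second moment and finite differential entropy, and f₁, f₂ are its marginal densities on ℝ^{ℓ₁} and ℝ^{ℓ₂} (each with finite positive second moment and finite differential entropy), then A(f) ≥ A(f₁) + A(f₂). -/
open MeasureTheory Real Matrix

/-- Second moment `E_f = ∫ |w|² f(w) dw` of a density on `ℝ^ℓ`. -/
noncomputable def Ef (ℓ : ℕ) (f : (Fin ℓ → ℝ) → ℝ) : ℝ :=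
  ∫ w : Fin ℓ → ℝ, (∑ i, (w i)^2) * f w

/-- Differential entropy `h(f) = −∫ f ln f`. -/
noncomputable def dEnt (ℓ : ℕ) (f : (Fin ℓ → ℝ) → ℝ) : ℝ :=
  -∫ w : Fin ℓ → ℝ, f w * Real.log (f w)

/-- Anisotropy `A(f) = (ℓ/2)·ln(2πe·E_f/ℓ) − h(f)`. -/
noncomputable def aniso (ℓ : ℕ) (f : (Fin ℓ → ℝ) → ℝ) : ℝ :=
  ((ℓ : ℝ) / 2) * Real.log (2 * π * Real.exp 1 * Ef ℓ f / ℓ) - dEnt ℓ f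

/-- A probability density on `ℝ^ℓ` with finite positive second moment and
finite differential entropy. -/
structure IsGoodDensity (ℓ : ℕ) (f : (Fin ℓ → ℝ) → ℝ) : Prop where
  nonneg : ∀ w, 0 ≤ f w
  integrable : Integrable f
  total : (∫ w, f w) = 1
  moment_integrable : Integrable (fun w : Fin ℓ → ℝ => (∑ i, (w i)^2) * f w)
  moment_pos : 0 < Ef ℓ f
  entropy_integrable : Integrable (fun w : Fin ℓ → ℝ => f w * Real.log (f w))

/-- Second moment of a joint density on `ℝ^{ℓ₁} × ℝ^{ℓ₂}`. -/
noncomputable def Ef2 (ℓ₁ ℓ₂ : ℕ) (f : (Fin ℓ₁ → ℝ) × (Fin ℓ₂ → ℝ) → ℝ) : ℝ :=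
  ∫ p : (Fin ℓ₁ → ℝ) × (Fin ℓ₂ → ℝ), ((∑ i, (p.1 i)^2) + ∑ j, (p.2 j)^2) * f p

/-- Differential entropy of a joint density on `ℝ^{ℓ₁} × ℝ^{ℓ₂}`. -/
noncomputable def dEnt2 (ℓ₁ ℓ₂ : ℕ) (f : (Fin ℓ₁ → ℝ) × (Fin ℓ₂ → ℝ) → ℝ) : ℝ :=
  -∫ p : (Fin ℓ₁ → ℝ) × (Fin ℓ₂ → ℝ), f p * Real.log (f p)

/-- Anisotropy of a joint density on `ℝ^{ℓ₁} × ℝ^{ℓ₂}` (a copy of `ℝ^{ℓ₁+ℓ₂}`). -/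
noncomputable def aniso2 (ℓ₁ ℓ₂ : ℕ) (f : (Fin ℓ₁ → ℝ) × (Fin ℓ₂ → ℝ) → ℝ) : ℝ :=
  (((ℓ₁ : ℝ) + ℓ₂) / 2) * Real.log (2 * π * Real.exp 1 * Ef2 ℓ₁ ℓ₂ f / ((ℓ₁ : ℝ) + ℓ₂)) -
    dEnt2 ℓ₁ ℓ₂ f

/-- A joint probability density on `ℝ^{ℓ₁} × ℝ^{ℓ₂}` with finite positive second
moment and finite differential entropy. -/
structure IsGoodDensity2 (ℓ₁ ℓ₂ : ℕ) (f : (Fin ℓ₁ → ℝ) × (Fin ℓ₂ → ℝ) → ℝ) : Prop where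
  nonneg : ∀ p, 0 ≤ f p
  integrable : Integrable f
  total : (∫ p, f p) = 1
  moment_integrable :
    Integrable (fun p : (Fin ℓ₁ → ℝ) × (Fin ℓ₂ → ℝ) => ((∑ i, (p.1 i)^2) + ∑ j, (p.2 j)^2) * f p)
  moment_pos : 0 < Ef2 ℓ₁ ℓ₂ f
  entropy_integrable :
    Integrable (fun p : (Fin ℓ₁ → ℝ) × (Fin ℓ₂ → ℝ) => f p * Real.log (f p))

/-! Splitting `|w|² = |x|² + |y|²` makes the second moment additive, `E_f = E_{f₁} + E_{f₂}`,
while Gibbs' inequality `t log t - t log s ≥ t - s`, integrated against the product of the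
marginals, makes the entropy subadditive, `h(f) ≤ h(f₁) + h(f₂)`. What remains is
`ℓ₁ log (c E₁ / ℓ₁) + ℓ₂ log (c E₂ / ℓ₂) ≤ (ℓ₁ + ℓ₂) log (c (E₁ + E₂) / (ℓ₁ + ℓ₂))`,
which is concavity of `log` with weights `ℓᵢ / (ℓ₁ + ℓ₂)`. -/

lemma sub_mul_le_mul_log_sub_mul_log_sub_mul_log {t a b : ℝ} (ht : 0 ≤ t) (ha : 0 ≤ a)
    (hb : 0 ≤ b) (hta : a = 0 → t = 0) (htb : b = 0 → t = 0) :
    t - a * b ≤ t * log t - t * log a - t * log b := by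
  rcases ht.eq_or_lt with rfl | ht
  · simpa using mul_nonneg ha hb
  have ha : 0 < a := ha.lt_of_ne fun h => ht.ne' (hta h.symm)
  have hb : 0 < b := hb.lt_of_ne fun h => ht.ne' (htb h.symm)
  have hlog := log_le_sub_one_of_pos (div_pos (mul_pos ha hb) ht)
  rw [log_div (mul_pos ha hb).ne' ht.ne', log_mul ha.ne' hb.ne'] at hlog
  have key : t * (log a + log b - log t) ≤ a * b - t := by
    calc _ ≤ t * (a * b / t - 1) := mul_le_mul_of_nonneg_left hlog ht.le
      _ = a * b - t := by field_simp
  linarith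

lemma mul_log_add_mul_log_le {w₁ w₂ x₁ x₂ : ℝ} (hw₁ : 0 < w₁) (hw₂ : 0 < w₂) (hx₁ : 0 < x₁)
    (hx₂ : 0 < x₂) :
    w₁ * log x₁ + w₂ * log x₂ ≤ (w₁ + w₂) * log ((w₁ * x₁ + w₂ * x₂) / (w₁ + w₂)) := by
  have hw : 0 < w₁ + w₂ := add_pos hw₁ hw₂
  have hjensen := strictConcaveOn_log_Ioi.concaveOn.2 hx₁ hx₂ (div_pos hw₁ hw).le
    (div_pos hw₂ hw).le (by field_simp)
  simp only [smul_eq_mul] at hjensen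
  calc w₁ * log x₁ + w₂ * log x₂
      = (w₁ + w₂) * (w₁ / (w₁ + w₂) * log x₁ + w₂ / (w₁ + w₂) * log x₂) := by field_simp
    _ ≤ (w₁ + w₂) * log (w₁ / (w₁ + w₂) * x₁ + w₂ / (w₁ + w₂) * x₂) := by gcongr
    _ = (w₁ + w₂) * log ((w₁ * x₁ + w₂ * x₂) / (w₁ + w₂)) := by congr 2; field_simp

section Marginal

variable {α β : Type*} [MeasurableSpace α] [MeasurableSpace β]
  {μ : Measure α} {ν : Measure β} [SigmaFinite μ] [SigmaFinite ν]
  {f : α × β → ℝ} {f₁ g : α → ℝ} {f₂ h : β → ℝ}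

lemma integrable_comp_fst_mul_of_marginal (hf : Integrable f (μ.prod ν)) (hnn : ∀ p, 0 ≤ f p)
    (hm : ∀ x, f₁ x = ∫ y, f (x, y) ∂ν) (hg : AEStronglyMeasurable g μ)
    (hgf : Integrable (fun x => g x * f₁ x) μ) :
    Integrable (fun p => g p.1 * f p) (μ.prod ν) := by
  have hmeas : AEStronglyMeasurable (fun p => g p.1 * f p) (μ.prod ν) :=
    hg.comp_fst.mul hf.aestronglyMeasurable
  refine (integrable_prod_iff hmeas).2 ⟨?_, hgf.norm.congr (ae_of_all _ fun x => ?_)⟩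
  · filter_upwards [hf.prod_right_ae] with x hx using hx.const_mul (g x)
  · have hf₁x : 0 ≤ f₁ x := hm x ▸ integral_nonneg fun y => hnn _
    dsimp only
    rw [norm_mul, Real.norm_of_nonneg hf₁x, hm x]
    simp only [norm_mul, Real.norm_of_nonneg (hnn _), integral_const_mul]

lemma integral_comp_fst_mul_of_marginal (hf : Integrable f (μ.prod ν)) (hnn : ∀ p, 0 ≤ f p)
    (hm : ∀ x, f₁ x = ∫ y, f (x, y) ∂ν) (hg : AEStronglyMeasurable g μ)
    (hgf : Integrable (fun x => g x * f₁ x) μ) :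
    ∫ p, g p.1 * f p ∂μ.prod ν = ∫ x, g x * f₁ x ∂μ := by
  rw [integral_prod _ (integrable_comp_fst_mul_of_marginal hf hnn hm hg hgf)]
  simp only [integral_const_mul, hm]

lemma integrable_comp_snd_mul_of_marginal (hf : Integrable f (μ.prod ν)) (hnn : ∀ p, 0 ≤ f p)
    (hm : ∀ y, f₂ y = ∫ x, f (x, y) ∂μ) (hh : AEStronglyMeasurable h ν)
    (hhf : Integrable (fun y => h y * f₂ y) ν) :
    Integrable (fun p => h p.2 * f p) (μ.prod ν) :=
  (integrable_comp_fst_mul_of_marginal hf.swap (fun p => hnn p.swap) hm hh hhf).swap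

lemma integral_comp_snd_mul_of_marginal (hf : Integrable f (μ.prod ν)) (hnn : ∀ p, 0 ≤ f p)
    (hm : ∀ y, f₂ y = ∫ x, f (x, y) ∂μ) (hh : AEStronglyMeasurable h ν)
    (hhf : Integrable (fun y => h y * f₂ y) ν) :
    ∫ p, h p.2 * f p ∂μ.prod ν = ∫ y, h y * f₂ y ∂ν := by
  rw [← integral_prod_swap]
  exact integral_comp_fst_mul_of_marginal hf.swap (fun p => hnn p.swap) hm hh hhf

lemma ae_eq_zero_of_marginal_fst_eq_zero (hf : Integrable f (μ.prod ν)) (hnn : ∀ p, 0 ≤ f p)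
    (hm : ∀ x, f₁ x = ∫ y, f (x, y) ∂ν) (hf₁ : AEStronglyMeasurable f₁ μ) :
    ∀ᵐ p ∂μ.prod ν, f₁ p.1 = 0 → f p = 0 := by
  set Z := f₁ ⁻¹' {0}
  have hZ : AEStronglyMeasurable (Z.indicator fun _ => (1 : ℝ)) μ :=
    aestronglyMeasurable_const.indicator₀ (hf₁.aemeasurable.nullMeasurable (measurableSet_singleton 0))
  have hZf₁ : (fun x => Z.indicator (fun _ => (1 : ℝ)) x * f₁ x) = 0 := by
    ext x
    by_cases hx : x ∈ Z <;> simp_all [Z]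
  have hZf₁i : Integrable (fun x => Z.indicator (fun _ => (1 : ℝ)) x * f₁ x) μ :=
    hZf₁ ▸ integrable_zero _ _ μ
  have hint := integral_comp_fst_mul_of_marginal hf hnn hm hZ hZf₁i
  rw [hZf₁, Pi.zero_def, integral_zero, integral_eq_zero_iff_of_nonneg
    (fun p => mul_nonneg (Set.indicator_nonneg (fun _ _ => zero_le_one) _) (hnn p))
    (integrable_comp_fst_mul_of_marginal hf hnn hm hZ hZf₁i)] at hint
  filter_upwards [hint] with p hp hp0
  simpa [Z, hp0] using hp

lemma ae_eq_zero_of_marginal_snd_eq_zero (hf : Integrable f (μ.prod ν)) (hnn : ∀ p, 0 ≤ f p)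
    (hm : ∀ y, f₂ y = ∫ x, f (x, y) ∂μ) (hf₂ : AEStronglyMeasurable f₂ ν) :
    ∀ᵐ p ∂μ.prod ν, f₂ p.2 = 0 → f p = 0 :=
  Measure.measurePreserving_swap.quasiMeasurePreserving.ae
    (ae_eq_zero_of_marginal_fst_eq_zero hf.swap (fun p => hnn p.swap) hm hf₂)

lemma integral_mul_log_marginal_add_le (hf : Integrable f (μ.prod ν)) (hnn : ∀ p, 0 ≤ f p)
    (htot : ∫ p, f p ∂μ.prod ν = 1) (hent : Integrable (fun p => f p * log (f p)) (μ.prod ν))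
    (hm₁ : ∀ x, f₁ x = ∫ y, f (x, y) ∂ν) (hm₂ : ∀ y, f₂ y = ∫ x, f (x, y) ∂μ)
    (hent₁ : Integrable (fun x => f₁ x * log (f₁ x)) μ)
    (hent₂ : Integrable (fun y => f₂ y * log (f₂ y)) ν) :
    ∫ x, f₁ x * log (f₁ x) ∂μ + ∫ y, f₂ y * log (f₂ y) ∂ν ≤ ∫ p, f p * log (f p) ∂μ.prod ν := by
  have hf₁ : Integrable f₁ μ := funext hm₁ ▸ hf.integral_prod_left
  have hf₂ : Integrable f₂ ν := funext hm₂ ▸ hf.integral_prod_right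
  have hf₁nn (x : α) : 0 ≤ f₁ x := hm₁ x ▸ integral_nonneg fun y => hnn _
  have hf₂nn (y : β) : 0 ≤ f₂ y := hm₂ y ▸ integral_nonneg fun x => hnn _
  have htot₁ : ∫ x, f₁ x ∂μ = 1 := by simp only [hm₁, ← integral_prod _ hf, htot]
  have htot₂ : ∫ y, f₂ y ∂ν = 1 := by simp only [hm₂, ← integral_prod_symm _ hf, htot]
  have hlog₁ : AEStronglyMeasurable (fun x => log (f₁ x)) μ :=
    hf₁.aemeasurable.log.aestronglyMeasurable
  have hlog₂ : AEStronglyMeasurable (fun y => log (f₂ y)) ν :=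
    hf₂.aemeasurable.log.aestronglyMeasurable
  have hent₁' : Integrable (fun x => log (f₁ x) * f₁ x) μ :=
    hent₁.congr (ae_of_all _ fun x => mul_comm _ _)
  have hent₂' : Integrable (fun y => log (f₂ y) * f₂ y) ν :=
    hent₂.congr (ae_of_all _ fun y => mul_comm _ _)
  have hI₁ := integrable_comp_fst_mul_of_marginal hf hnn hm₁ hlog₁ hent₁'
  have hI₂ := integrable_comp_snd_mul_of_marginal hf hnn hm₂ hlog₂ hent₂'
  have hprod : Integrable (fun p => f₁ p.1 * f₂ p.2) (μ.prod ν) := hf₁.mul_prod hf₂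
  -- Since `log 0 = 0`, the pointwise bound needs `f = 0` wherever a marginal vanishes.
  have hpt : ∀ᵐ p ∂μ.prod ν, f p - f₁ p.1 * f₂ p.2
      ≤ f p * log (f p) - log (f₁ p.1) * f p - log (f₂ p.2) * f p := by
    filter_upwards [ae_eq_zero_of_marginal_fst_eq_zero hf hnn hm₁ hf₁.1,
      ae_eq_zero_of_marginal_snd_eq_zero hf hnn hm₂ hf₂.1] with p h₁ h₂
    linarith [sub_mul_le_mul_log_sub_mul_log_sub_mul_log (hnn p) (hf₁nn p.1) (hf₂nn p.2) h₁ h₂]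
  have hI₀ : Integrable (fun p => f p * log (f p) - log (f₁ p.1) * f p) (μ.prod ν) := hent.sub hI₁
  have hmono : ∫ p, (f p - f₁ p.1 * f₂ p.2) ∂μ.prod ν
      ≤ ∫ p, (f p * log (f p) - log (f₁ p.1) * f p - log (f₂ p.2) * f p) ∂μ.prod ν :=
    integral_mono_ae (hf.sub hprod) (hI₀.sub hI₂) hpt
  rw [integral_sub hf hprod, integral_sub hI₀ hI₂, integral_sub hent hI₁,
    integral_prod_mul, integral_comp_fst_mul_of_marginal hf hnn hm₁ hlog₁ hent₁',
    integral_comp_snd_mul_of_marginal hf hnn hm₂ hlog₂ hent₂', htot, htot₁, htot₂] at hmono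
  simp only [mul_comm (log _)] at hmono
  linarith

end Marginal

lemma IsGoodDensity.dim_pos {ℓ : ℕ} {f : (Fin ℓ → ℝ) → ℝ} (hf : IsGoodDensity ℓ f) : 0 < ℓ := by
  rcases ℓ.eq_zero_or_pos with rfl | hℓ
  · simpa [Ef] using hf.moment_pos
  · exact hℓ

lemma Ef2_eq_add {ℓ₁ ℓ₂ : ℕ} {f : (Fin ℓ₁ → ℝ) × (Fin ℓ₂ → ℝ) → ℝ} {f₁ : (Fin ℓ₁ → ℝ) → ℝ}
    {f₂ : (Fin ℓ₂ → ℝ) → ℝ} (hf : Integrable f) (hnn : ∀ p, 0 ≤ f p)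
    (hm₁ : ∀ x, f₁ x = ∫ y, f (x, y)) (hm₂ : ∀ y, f₂ y = ∫ x, f (x, y))
    (hmom₁ : Integrable (fun x : Fin ℓ₁ → ℝ => (∑ i, (x i) ^ 2) * f₁ x))
    (hmom₂ : Integrable (fun y : Fin ℓ₂ → ℝ => (∑ j, (y j) ^ 2) * f₂ y)) :
    Ef2 ℓ₁ ℓ₂ f = Ef ℓ₁ f₁ + Ef ℓ₂ f₂ := by
  have hsq₁ : AEStronglyMeasurable (fun x : Fin ℓ₁ → ℝ => ∑ i, (x i) ^ 2) :=
    Continuous.aestronglyMeasurable (by fun_prop)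
  have hsq₂ : AEStronglyMeasurable (fun y : Fin ℓ₂ → ℝ => ∑ j, (y j) ^ 2) :=
    Continuous.aestronglyMeasurable (by fun_prop)
  simp only [Ef2, Ef, add_mul]
  rw [Measure.volume_eq_prod, integral_add (integrable_comp_fst_mul_of_marginal hf hnn hm₁ hsq₁ hmom₁)
      (integrable_comp_snd_mul_of_marginal hf hnn hm₂ hsq₂ hmom₂),
    integral_comp_fst_mul_of_marginal hf hnn hm₁ hsq₁ hmom₁,
    integral_comp_snd_mul_of_marginal hf hnn hm₂ hsq₂ hmom₂]

theorem anisotropy_superadditive_general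
    (ℓ₁ ℓ₂ : ℕ)
    (f : (Fin ℓ₁ → ℝ) × (Fin ℓ₂ → ℝ) → ℝ)
    (f₁ : (Fin ℓ₁ → ℝ) → ℝ) (f₂ : (Fin ℓ₂ → ℝ) → ℝ)
    (hf : IsGoodDensity2 ℓ₁ ℓ₂ f)
    (hf₁ : IsGoodDensity ℓ₁ f₁) (hf₂ : IsGoodDensity ℓ₂ f₂)
    (hmarg₁ : ∀ x : Fin ℓ₁ → ℝ, f₁ x = ∫ y : Fin ℓ₂ → ℝ, f (x, y))
    (hmarg₂ : ∀ y : Fin ℓ₂ → ℝ, f₂ y = ∫ x : Fin ℓ₁ → ℝ, f (x, y)) :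
    aniso ℓ₁ f₁ + aniso ℓ₂ f₂ ≤ aniso2 ℓ₁ ℓ₂ f := by
  have hE := Ef2_eq_add hf.integrable hf.nonneg hmarg₁ hmarg₂ hf₁.moment_integrable
    hf₂.moment_integrable
  have hH := integral_mul_log_marginal_add_le hf.integrable hf.nonneg hf.total
    hf.entropy_integrable hmarg₁ hmarg₂ hf₁.entropy_integrable hf₂.entropy_integrable
  have hℓ₁ : (0 : ℝ) < ℓ₁ := Nat.cast_pos.2 hf₁.dim_pos
  have hℓ₂ : (0 : ℝ) < ℓ₂ := Nat.cast_pos.2 hf₂.dim_pos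
  have hc : 0 < 2 * π * exp 1 := by positivity
  have hlog := mul_log_add_mul_log_le hℓ₁ hℓ₂ (div_pos (mul_pos hc hf₁.moment_pos) hℓ₁)
    (div_pos (mul_pos hc hf₂.moment_pos) hℓ₂)
  rw [mul_div_cancel₀ _ hℓ₁.ne', mul_div_cancel₀ _ hℓ₂.ne', ← mul_add, ← hE] at hlog
  simp only [aniso, aniso2, dEnt, dEnt2]
  rw [Measure.volume_eq_prod]
  linarith

/-- Superadditivity of the anisotropy with respect to partitioning:
`A(f) ≥ A(f₁) + A(f₂)` for the marginal densities `f₁, f₂` of a joint density `f`. -/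
theorem anisotropy_superadditive
    (ℓ₁ ℓ₂ : ℕ) (hℓ₁ : 1 ≤ ℓ₁) (hℓ₂ : 1 ≤ ℓ₂)
    (f : (Fin ℓ₁ → ℝ) × (Fin ℓ₂ → ℝ) → ℝ)
    (f₁ : (Fin ℓ₁ → ℝ) → ℝ) (f₂ : (Fin ℓ₂ → ℝ) → ℝ)
    (hf : IsGoodDensity2 ℓ₁ ℓ₂ f)
    (hf₁ : IsGoodDensity ℓ₁ f₁) (hf₂ : IsGoodDensity ℓ₂ f₂)
    (hmarg₁ : ∀ x : Fin ℓ₁ → ℝ, f₁ x = ∫ y : Fin ℓ₂ → ℝ, f (x, y))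
    (hmarg₂ : ∀ y : Fin ℓ₂ → ℝ, f₂ y = ∫ x : Fin ℓ₁ → ℝ, f (x, y)) :
    aniso ℓ₁ f₁ + aniso ℓ₂ f₂ ≤ aniso2 ℓ₁ ℓ₂ f :=
  anisotropy_superadditive_general ℓ₁ ℓ₂ f f₁ f₂ hf hf₁ hf₂ hmarg₁ hmarg₂
end

section
/- For every matrix F ∈ ℝ^{s×ℓ}, the 0-anisotropic norm equals the scaled Frobenius norm: ⦀F⦀₀ = ‖F‖_F / √ℓ. -/
open MeasureTheory Real Matrix

/-- The RMS gain `R(F,f) = sqrt((∫ |F w|² f(w) dw)/E_f)`. -/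
noncomputable def RMS {s ℓ : ℕ} (F : Matrix (Fin s) (Fin ℓ) ℝ) (f : (Fin ℓ → ℝ) → ℝ) : ℝ :=
  Real.sqrt ((∫ w : Fin ℓ → ℝ, (∑ j, (F.mulVec w j)^2) * f w) / Ef ℓ f)

/-- Frobenius norm of a matrix. -/
noncomputable def frobNorm {s ℓ : ℕ} (F : Matrix (Fin s) (Fin ℓ) ℝ) : ℝ :=
  Real.sqrt ((Fᵀ * F).trace)

/-- The `a`-anisotropic norm `⦀F⦀_a = sup{R(F,f) : A(f) ≤ a}`. -/
noncomputable def anorm {s ℓ : ℕ} (a : ℝ) (F : Matrix (Fin s) (Fin ℓ) ℝ) : ℝ :=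
  sSup {x : ℝ | ∃ f : (Fin ℓ → ℝ) → ℝ, IsGoodDensity ℓ f ∧ aniso ℓ f ≤ a ∧ x = RMS F f}

/-!
A density `f` with second moment `E_f` has the same second moment as the isotropic Gaussian `g`
of variance `E_f / ℓ`, and `∫ f log g` only sees that second moment. This turns the anisotropy
into a relative entropy: `A(f) = ∫ g · klFun (f / g) ≥ 0`, with equality exactly when `f = g`
almost everywhere. So the densities with `A(f) ≤ 0` are the isotropic Gaussians, and for each of
them `∫ |F w|² f = (E_f / ℓ) · tr (Fᵀ F)`, i.e. `R(F, f) = ‖F‖_F / √ℓ`.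
-/

open ProbabilityTheory InformationTheory
open scoped NNReal

lemma integrable_pow_gaussianReal (μ : ℝ) (v : ℝ≥0) (k : ℕ) :
    Integrable (fun x => x ^ k) (gaussianReal μ v) := by
  rcases k.eq_zero_or_pos with rfl | hk
  · simp
  · exact ((memLp_id_gaussianReal k).integrable_norm_pow hk.ne').mono'
      (by fun_prop) (ae_of_all _ fun x => by simp)

lemma integrable_pow_mul_gaussianPDFReal (μ : ℝ) (v : ℝ≥0) (k : ℕ) :
    Integrable (fun x => x ^ k * gaussianPDFReal μ v x) := by
  rcases eq_or_ne v 0 with rfl | hv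
  · simp
  have h := integrable_pow_gaussianReal μ v k
  rw [gaussianReal_of_var_ne_zero μ hv, integrable_withDensity_iff_integrable_smul'
    (measurable_gaussianPDF μ v) (ae_of_all _ fun _ => gaussianPDF_lt_top)] at h
  simpa [toReal_gaussianPDF, mul_comm] using h

lemma integral_mul_gaussianPDFReal (μ : ℝ) {v : ℝ≥0} (hv : v ≠ 0) :
    ∫ x, x * gaussianPDFReal μ v x = μ := by
  simpa [mul_comm] using
    (integral_gaussianReal_eq_integral_smul (f := fun x => x) hv).symm.trans
      integral_id_gaussianReal

lemma integral_sq_mul_gaussianPDFReal (v : ℝ≥0) :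
    ∫ x, x ^ 2 * gaussianPDFReal 0 v x = v := by
  rcases eq_or_ne v 0 with rfl | hv
  · simp
  have h := variance_fun_id_gaussianReal (μ := 0) (v := v)
  rw [variance_eq_integral measurable_id'.aemeasurable,
    integral_gaussianReal_eq_integral_smul hv] at h
  simpa [mul_comm] using h

noncomputable def isoGaussianPDF (ι : Type*) [Fintype ι] (v : ℝ≥0) (w : ι → ℝ) : ℝ :=
  ∏ i, gaussianPDFReal 0 v (w i)

namespace isoGaussianPDF

variable {ι : Type*} [Fintype ι] {v : ℝ≥0}

lemma pos (hv : v ≠ 0) (w : ι → ℝ) : 0 < isoGaussianPDF ι v w :=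
  Finset.prod_pos fun i _ => gaussianPDFReal_pos 0 v (w i) hv

lemma integrable : Integrable (isoGaussianPDF ι v) :=
  Integrable.fintype_prod fun _ => integrable_gaussianPDFReal 0 v

lemma integral_eq_one (hv : v ≠ 0) : ∫ w, isoGaussianPDF ι v w = 1 := by
  simp [isoGaussianPDF, integral_fintype_prod_volume_eq_prod (fun _ => gaussianPDFReal 0 v),
    integral_gaussianPDFReal_eq_one 0 hv]

lemma log_eq (hv : v ≠ 0) (w : ι → ℝ) :
    log (isoGaussianPDF ι v w) =
      -(Fintype.card ι / 2) * log (2 * π * v) - (∑ i, w i ^ 2) / (2 * v) := by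
  have h2πv : 0 < 2 * π * v := by positivity
  have hlog (x : ℝ) : log (gaussianPDFReal 0 v x) = -log (2 * π * v) / 2 - x ^ 2 / (2 * v) := by
    rw [gaussianPDFReal_def, log_mul (inv_ne_zero (sqrt_pos.2 h2πv).ne') (exp_ne_zero _),
      log_inv, log_sqrt h2πv.le, log_exp]
    ring
  rw [isoGaussianPDF, log_prod fun i _ => (gaussianPDFReal_pos 0 v (w i) hv).ne']
  simp only [hlog, Finset.sum_sub_distrib, Finset.sum_const, Finset.card_univ, nsmul_eq_mul,
    Finset.sum_div]
  ring

lemma quadForm_mul_eq_sum (M : Matrix ι ι ℝ) (w : ι → ℝ) :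
    (w ⬝ᵥ M *ᵥ w) * isoGaussianPDF ι v w =
      ∑ i, ∑ j, M i j * (w i * w j * isoGaussianPDF ι v w) := by
  simp only [dotProduct, mulVec, Finset.mul_sum, Finset.sum_mul]
  exact Finset.sum_congr rfl fun i _ => Finset.sum_congr rfl fun j _ => by ring

variable [DecidableEq ι]

lemma coord_mul_coord_mul_eq_prod (i j : ι) (w : ι → ℝ) :
    w i * w j * isoGaussianPDF ι v w =
      ∏ m, (w m ^ ((if i = m then 1 else 0) + (if j = m then 1 else 0)) *
        gaussianPDFReal 0 v (w m)) := by
  simp only [Finset.prod_mul_distrib, pow_add, Finset.prod_pow_boole, Finset.mem_univ, if_true,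
    isoGaussianPDF]

lemma integrable_coord_mul_coord_mul (i j : ι) :
    Integrable fun w => w i * w j * isoGaussianPDF ι v w := by
  simp only [coord_mul_coord_mul_eq_prod]
  exact Integrable.fintype_prod fun m => integrable_pow_mul_gaussianPDFReal 0 v _

lemma integral_coord_mul_coord_mul (hv : v ≠ 0) (i j : ι) :
    ∫ w, w i * w j * isoGaussianPDF ι v w = if i = j then (v : ℝ) else 0 := by
  simp only [coord_mul_coord_mul_eq_prod]
  rw [integral_fintype_prod_volume_eq_prod
    (fun m x => x ^ ((if i = m then 1 else 0) + (if j = m then 1 else 0)) *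
      gaussianPDFReal 0 v x)]
  split_ifs with hij
  · subst hij
    rw [Finset.prod_eq_single i (fun m _ hm => by simp [Ne.symm hm,
      integral_gaussianPDFReal_eq_one 0 hv]) (by simp)]
    simpa using integral_sq_mul_gaussianPDFReal v
  · exact Finset.prod_eq_zero (Finset.mem_univ i)
      (by simp [Ne.symm hij, integral_mul_gaussianPDFReal 0 hv])

lemma integrable_quadForm_mul (M : Matrix ι ι ℝ) :
    Integrable fun w => (w ⬝ᵥ M *ᵥ w) * isoGaussianPDF ι v w := by
  simp only [quadForm_mul_eq_sum]
  exact integrable_finsetSum _ fun i _ => integrable_finsetSum _ fun j _ =>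
    (integrable_coord_mul_coord_mul i j).const_mul _

lemma integral_quadForm_mul (hv : v ≠ 0) (M : Matrix ι ι ℝ) :
    ∫ w, (w ⬝ᵥ M *ᵥ w) * isoGaussianPDF ι v w = v * M.trace := by
  simp only [quadForm_mul_eq_sum]
  rw [integral_finsetSum _ fun i _ => integrable_finsetSum _ fun j _ =>
    (integrable_coord_mul_coord_mul (v := v) i j).const_mul (M i j)]
  simp only [integral_finsetSum _ fun j _ => (integrable_coord_mul_coord_mul _ j).const_mul _,
    integral_const_mul, integral_coord_mul_coord_mul hv, mul_ite, mul_zero,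
    Finset.sum_ite_eq, Finset.mem_univ, if_true, Matrix.trace, Matrix.diag, Finset.mul_sum]
  exact Finset.sum_congr rfl fun i _ => mul_comm _ _

end isoGaussianPDF

section RelativeEntropy

lemma mul_klFun_div (t : ℝ) {y : ℝ} (hy : y ≠ 0) :
    y * klFun (t / y) = t * log t - t * log y - t + y := by
  rcases eq_or_ne t 0 with rfl | ht
  · simp [klFun]
  rw [klFun_apply, log_div ht hy]
  field_simp
  ring

variable {α : Type*} [MeasurableSpace α] {μ : Measure α} {f g : α → ℝ}

lemma integrable_mul_klFun_div (hg0 : ∀ x, g x ≠ 0) (hf : Integrable f μ) (hg : Integrable g μ)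
    (hflogf : Integrable (fun x => f x * log (f x)) μ)
    (hflogg : Integrable (fun x => f x * log (g x)) μ) :
    Integrable (fun x => g x * klFun (f x / g x)) μ := by
  simp only [mul_klFun_div _ (hg0 _)]
  exact ((hflogf.sub hflogg).sub hf).add hg

lemma integral_mul_klFun_div (hg0 : ∀ x, g x ≠ 0) (hf : Integrable f μ) (hg : Integrable g μ)
    (hflogf : Integrable (fun x => f x * log (f x)) μ)
    (hflogg : Integrable (fun x => f x * log (g x)) μ) :
    ∫ x, g x * klFun (f x / g x) ∂μ =
      ∫ x, f x * log (f x) ∂μ - ∫ x, f x * log (g x) ∂μ - ∫ x, f x ∂μ + ∫ x, g x ∂μ := by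
  simp only [mul_klFun_div _ (hg0 _)]
  rw [integral_add (f := fun x => f x * log (f x) - f x * log (g x) - f x)
      ((hflogf.sub hflogg).sub hf) hg,
    integral_sub (f := fun x => f x * log (f x) - f x * log (g x)) (hflogf.sub hflogg) hf,
    integral_sub hflogf hflogg]

end RelativeEntropy

lemma sum_sq_eq_dotProduct_one_mulVec {ι : Type*} [Fintype ι] [DecidableEq ι] (w : ι → ℝ) :
    ∑ i, w i ^ 2 = w ⬝ᵥ (1 : Matrix ι ι ℝ) *ᵥ w := by
  simp [dotProduct, sq]

lemma sum_mulVec_sq_eq_dotProduct {κ ι : Type*} [Fintype κ] [Fintype ι]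
    (F : Matrix κ ι ℝ) (w : ι → ℝ) :
    ∑ j, (F *ᵥ w) j ^ 2 = w ⬝ᵥ (Fᵀ * F) *ᵥ w := by
  rw [← mulVec_mulVec, dotProduct_mulVec, vecMul_transpose]
  simp [dotProduct, sq]

section Anisotropy

variable {ℓ : ℕ} {f : (Fin ℓ → ℝ) → ℝ} {v : ℝ≥0}

lemma integrable_moment_isoGaussianPDF :
    Integrable fun w : Fin ℓ → ℝ => (∑ i, w i ^ 2) * isoGaussianPDF (Fin ℓ) v w := by
  simpa only [sum_sq_eq_dotProduct_one_mulVec] using isoGaussianPDF.integrable_quadForm_mul 1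

lemma Ef_isoGaussianPDF (hv : v ≠ 0) : Ef ℓ (isoGaussianPDF (Fin ℓ) v) = v * ℓ := by
  simp only [Ef, sum_sq_eq_dotProduct_one_mulVec, isoGaussianPDF.integral_quadForm_mul hv,
    trace_one, Fintype.card_fin]

lemma mul_log_isoGaussianPDF (hv : v ≠ 0) (w : Fin ℓ → ℝ) :
    f w * log (isoGaussianPDF (Fin ℓ) v w) =
      -(ℓ / 2 * log (2 * π * v)) * f w - (2 * (v : ℝ))⁻¹ * ((∑ i, w i ^ 2) * f w) := by
  rw [isoGaussianPDF.log_eq hv, Fintype.card_fin]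
  ring

lemma integrable_mul_log_isoGaussianPDF (hv : v ≠ 0) (hf : Integrable f)
    (hf2 : Integrable fun w : Fin ℓ → ℝ => (∑ i, w i ^ 2) * f w) :
    Integrable fun w => f w * log (isoGaussianPDF (Fin ℓ) v w) := by
  simp only [mul_log_isoGaussianPDF hv]
  exact (hf.const_mul _).sub (hf2.const_mul _)

lemma integral_mul_log_isoGaussianPDF (hv : v ≠ 0) (hf : IsGoodDensity ℓ f) :
    ∫ w, f w * log (isoGaussianPDF (Fin ℓ) v w) =
      -(ℓ / 2 * log (2 * π * v)) - Ef ℓ f / (2 * v) := by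
  simp only [mul_log_isoGaussianPDF hv]
  rw [integral_sub (hf.integrable.const_mul _) (hf.moment_integrable.const_mul _),
    integral_const_mul, integral_const_mul, hf.total, Ef]
  ring

lemma aniso_eq_integral_klFun (hf : IsGoodDensity ℓ f) (hv : (v : ℝ) * ℓ = Ef ℓ f) :
    aniso ℓ f = ∫ w, isoGaussianPDF (Fin ℓ) v w * klFun (f w / isoGaussianPDF (Fin ℓ) v w) := by
  have hvℓ : (v : ℝ) * ℓ ≠ 0 := hv ▸ hf.moment_pos.ne'
  have hv0 : v ≠ 0 := by rintro rfl; simp at hvℓ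
  rw [integral_mul_klFun_div (fun w => (isoGaussianPDF.pos hv0 w).ne') hf.integrable
    isoGaussianPDF.integrable hf.entropy_integrable
    (integrable_mul_log_isoGaussianPDF hv0 hf.integrable hf.moment_integrable),
    integral_mul_log_isoGaussianPDF hv0 hf, hf.total, isoGaussianPDF.integral_eq_one hv0,
    aniso, dEnt, ← hv,
    show 2 * π * exp 1 * (v * ℓ) / ℓ = 2 * π * v * exp 1 by field_simp [right_ne_zero_of_mul hvℓ],
    log_mul (by positivity) (exp_pos 1).ne', log_exp]
  field_simp
  ring

lemma IsGoodDensity.exists_ae_eq_isoGaussianPDF_of_aniso_nonpos (hf : IsGoodDensity ℓ f)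
    (ha : aniso ℓ f ≤ 0) : ∃ v : ℝ≥0, v ≠ 0 ∧ f =ᵐ[volume] isoGaussianPDF (Fin ℓ) v := by
  have hℓ : (ℓ : ℝ) ≠ 0 := by
    rintro h
    obtain rfl : ℓ = 0 := by exact_mod_cast h
    simpa [Ef] using hf.moment_pos
  set v : ℝ≥0 := ⟨Ef ℓ f / ℓ, div_nonneg hf.moment_pos.le (Nat.cast_nonneg ℓ)⟩
  have hv : (v : ℝ) * ℓ = Ef ℓ f := div_mul_cancel₀ _ hℓ
  have hv0 : v ≠ 0 := by
    rintro h
    simpa [h, ← hv] using hf.moment_pos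
  set g := isoGaussianPDF (Fin ℓ) v
  have hD_nonneg : 0 ≤ fun w => g w * klFun (f w / g w) := fun w =>
    mul_nonneg (isoGaussianPDF.pos hv0 w).le
      (klFun_nonneg (div_nonneg (hf.nonneg w) (isoGaussianPDF.pos hv0 w).le))
  have hD_int := integrable_mul_klFun_div (fun w => (isoGaussianPDF.pos hv0 w).ne')
    hf.integrable isoGaussianPDF.integrable hf.entropy_integrable
    (integrable_mul_log_isoGaussianPDF hv0 hf.integrable hf.moment_integrable)
  have hD_zero : ∫ w, g w * klFun (f w / g w) = 0 :=
    le_antisymm (aniso_eq_integral_klFun hf hv ▸ ha) (integral_nonneg hD_nonneg)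
  refine ⟨v, hv0, ?_⟩
  filter_upwards [(integral_eq_zero_iff_of_nonneg hD_nonneg hD_int).1 hD_zero] with w hw
  have hg := isoGaussianPDF.pos hv0 w
  rw [Pi.zero_apply, mul_eq_zero, or_iff_right hg.ne',
    klFun_eq_zero_iff (div_nonneg (hf.nonneg w) hg.le), div_eq_one_iff_eq hg.ne'] at hw
  exact hw

lemma isGoodDensity_isoGaussianPDF (hℓ : 0 < ℓ) (hv : v ≠ 0) :
    IsGoodDensity ℓ (isoGaussianPDF (Fin ℓ) v) where
  nonneg w := (isoGaussianPDF.pos hv w).le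
  integrable := isoGaussianPDF.integrable
  total := isoGaussianPDF.integral_eq_one hv
  moment_integrable := integrable_moment_isoGaussianPDF
  moment_pos := by rw [Ef_isoGaussianPDF hv]; positivity
  entropy_integrable := integrable_mul_log_isoGaussianPDF hv isoGaussianPDF.integrable
    integrable_moment_isoGaussianPDF

lemma aniso_isoGaussianPDF (hℓ : 0 < ℓ) (hv : v ≠ 0) : aniso ℓ (isoGaussianPDF (Fin ℓ) v) = 0 := by
  rw [aniso_eq_integral_klFun (isGoodDensity_isoGaussianPDF hℓ hv) (Ef_isoGaussianPDF hv).symm]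
  simp [div_self (isoGaussianPDF.pos hv _).ne', klFun_one]

end Anisotropy

lemma RMS_congr_ae {s ℓ : ℕ} (F : Matrix (Fin s) (Fin ℓ) ℝ) {f g : (Fin ℓ → ℝ) → ℝ}
    (hfg : f =ᵐ[volume] g) : RMS F f = RMS F g := by
  have h (φ : (Fin ℓ → ℝ) → ℝ) : ∫ w, φ w * f w = ∫ w, φ w * g w :=
    integral_congr_ae (hfg.mono fun w hw => congrArg (φ w * ·) hw)
  rw [RMS, RMS, Ef, Ef, h, h]

lemma RMS_isoGaussianPDF {s ℓ : ℕ} {v : ℝ≥0} (hv : v ≠ 0) (F : Matrix (Fin s) (Fin ℓ) ℝ) :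
    RMS F (isoGaussianPDF (Fin ℓ) v) = frobNorm F / √ℓ := by
  rw [RMS, Ef_isoGaussianPDF hv, frobNorm]
  simp only [sum_mulVec_sq_eq_dotProduct, isoGaussianPDF.integral_quadForm_mul hv]
  rw [mul_div_mul_left _ _ (NNReal.coe_ne_zero.2 hv), sqrt_div' _ (Nat.cast_nonneg ℓ)]

/-- The `0`-anisotropic norm equals the scaled Frobenius norm `‖F‖_F/√ℓ`. -/
theorem anorm_zero (s ℓ : ℕ) (hℓ : 1 ≤ ℓ) (F : Matrix (Fin s) (Fin ℓ) ℝ) :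
    anorm 0 F = frobNorm F / Real.sqrt ℓ := by
  have hS : {x : ℝ | ∃ f, IsGoodDensity ℓ f ∧ aniso ℓ f ≤ 0 ∧ x = RMS F f} =
      {frobNorm F / √ℓ} := by
    ext x
    constructor
    · rintro ⟨f, hf, ha, rfl⟩
      obtain ⟨v, hv, hfg⟩ := hf.exists_ae_eq_isoGaussianPDF_of_aniso_nonpos ha
      rw [Set.mem_singleton_iff, RMS_congr_ae F hfg, RMS_isoGaussianPDF hv]
    · rintro rfl
      exact ⟨_, isGoodDensity_isoGaussianPDF hℓ one_ne_zero,
        (aniso_isoGaussianPDF hℓ one_ne_zero).le, (RMS_isoGaussianPDF one_ne_zero F).symm⟩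
  rw [anorm, hS, csSup_singleton]
end

section
/- For every matrix F ∈ ℝ^{s×ℓ}, the function a ↦ ⦀F⦀_a is nondecreasing on [0,∞), satisfies ⦀F⦀_a ≤ σ_max(F) for all a ≥ 0, and converges to the largest singular value: lim_{a→+∞} ⦀F⦀_a = σ_max(F). -/
/-!
Enlarging `a` enlarges the admissible set, so `a ↦ ⦀F⦀_a` is monotone, and integrating the
pointwise bound `|F w|² ≤ σ_max(F)² |w|²` against `f` gives `R(F,f) ≤ σ_max(F)`.
For the limit, let `u` be a unit vector with `|F u|` close to `σ_max(F)` and take the uniform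
density on the unit cube centred at `R u`. On that cube `|w| ≤ R + √ℓ` and
`|F w| ≥ R |F u| - σ_max(F) √ℓ`, so its gain is at least `(R |F u| - σ_max(F) √ℓ) / (R + √ℓ)`,
which tends to `|F u|` as `R → ∞`; and each such density has finite anisotropy, hence is
admissible for all large `a`.
-/

open MeasureTheory Real Matrix

/-- The largest singular value of `F`: the supremum of `‖F w‖` over unit vectors `w`. -/
noncomputable def sigmaMax {s ℓ : ℕ} (F : Matrix (Fin s) (Fin ℓ) ℝ) : ℝ :=
  sSup {x : ℝ | ∃ w : Fin ℓ → ℝ, (∑ i, (w i)^2) = 1 ∧ x = Real.sqrt (∑ j, (F.mulVec w j)^2)}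

open Filter Topology WithLp

section Euclidean

variable {s ℓ : ℕ}

lemma sum_sq_eq_norm_toLp_sq {n : ℕ} (v : Fin n → ℝ) :
    ∑ i, v i ^ 2 = ‖toLp 2 v‖ ^ 2 :=
  (EuclideanSpace.real_norm_sq_eq (toLp 2 v)).symm

noncomputable def euclideanCLM (F : Matrix (Fin s) (Fin ℓ) ℝ) :
    EuclideanSpace ℝ (Fin ℓ) →L[ℝ] EuclideanSpace ℝ (Fin s) :=
  LinearMap.toContinuousLinearMap (toEuclideanLin F)

@[simp]
lemma euclideanCLM_toLp (F : Matrix (Fin s) (Fin ℓ) ℝ) (w : Fin ℓ → ℝ) :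
    euclideanCLM F (toLp 2 w) = toLp 2 (F *ᵥ w) :=
  rfl

lemma sum_mulVec_sq_eq_norm_sq (F : Matrix (Fin s) (Fin ℓ) ℝ) (w : Fin ℓ → ℝ) :
    ∑ j, (F *ᵥ w) j ^ 2 = ‖euclideanCLM F (toLp 2 w)‖ ^ 2 := by
  rw [euclideanCLM_toLp, sum_sq_eq_norm_toLp_sq]

lemma sigmaMax_eq_opNorm (F : Matrix (Fin s) (Fin ℓ) ℝ) :
    sigmaMax F = ‖euclideanCLM F‖ := by
  rw [← (euclideanCLM F).sSup_sphere_eq_norm, sigmaMax]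
  congr 1
  ext x
  simp only [Set.mem_ofPred_eq, Set.mem_image, mem_sphere_zero_iff_norm, sum_sq_eq_norm_toLp_sq,
    sqrt_sq (norm_nonneg _), pow_eq_one_iff_of_nonneg (norm_nonneg _) two_ne_zero]
  constructor
  · rintro ⟨w, hw, rfl⟩
    exact ⟨toLp 2 w, hw, rfl⟩
  · rintro ⟨u, hu, rfl⟩
    exact ⟨ofLp u, hu, rfl⟩

lemma norm_toLp_sub_le (w c : Fin ℓ → ℝ) :
    ‖toLp 2 w - toLp 2 c‖ ≤ √ℓ * dist w c := by
  have := (PiLp.lipschitzWith_toLp 2 (fun _ : Fin ℓ => ℝ)).dist_le_mul w c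
  rw [dist_eq_norm] at this
  convert this using 2
  simp [NNReal.coe_rpow, Real.sqrt_eq_rpow]

end Euclidean

section UniformDensity

variable {α : Type*} [MeasurableSpace α] {μ : Measure α} {S : Set α}

noncomputable def uniformDensity (μ : Measure α) (S : Set α) : α → ℝ :=
  S.indicator fun _ => (μ.real S)⁻¹

lemma uniformDensity_nonneg (x : α) : 0 ≤ uniformDensity μ S x :=
  Set.indicator_nonneg (fun _ _ => inv_nonneg.2 measureReal_nonneg) x

lemma integrable_uniformDensity (hS : MeasurableSet S) (hμS : μ S ≠ ⊤) :
    Integrable (uniformDensity μ S) μ :=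
  (integrable_indicator_iff hS).2 (integrableOn_const hμS)

lemma integral_uniformDensity (hS : MeasurableSet S) (hμ0 : μ S ≠ 0) (hμS : μ S ≠ ⊤) :
    ∫ x, uniformDensity μ S x ∂μ = 1 := by
  rw [uniformDensity, integral_indicator_const _ hS, smul_eq_mul,
    mul_inv_cancel₀ (measureReal_ne_zero_iff hμS |>.2 hμ0)]

lemma integrable_uniformDensity_mul_log (hS : MeasurableSet S) (hμS : μ S ≠ ⊤) :
    Integrable (fun x => uniformDensity μ S x * log (uniformDensity μ S x)) μ := by
  have h : (fun x => uniformDensity μ S x * log (uniformDensity μ S x)) =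
      S.indicator fun _ => (μ.real S)⁻¹ * log (μ.real S)⁻¹ := by
    ext x
    by_cases hx : x ∈ S <;> simp [uniformDensity, hx]
  rw [h]
  exact (integrable_indicator_iff hS).2 (integrableOn_const hμS)

lemma mul_uniformDensity_eq_indicator (g : α → ℝ) :
    (fun x => g x * uniformDensity μ S x) = S.indicator fun x => g x * (μ.real S)⁻¹ := by
  ext x
  by_cases hx : x ∈ S <;> simp [uniformDensity, hx]

lemma integrable_mul_uniformDensity (hS : MeasurableSet S) {g : α → ℝ} (hg : IntegrableOn g S μ) :
    Integrable (fun x => g x * uniformDensity μ S x) μ := by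
  rw [mul_uniformDensity_eq_indicator, integrable_indicator_iff hS]
  exact hg.mul_const _

lemma integral_mul_uniformDensity (hS : MeasurableSet S) (g : α → ℝ) :
    ∫ x, g x * uniformDensity μ S x ∂μ = ⨍ x in S, g x ∂μ := by
  rw [mul_uniformDensity_eq_indicator, integral_indicator hS, integral_mul_const, setAverage_eq,
    smul_eq_mul, mul_comm]

lemma le_integral_mul_uniformDensity (hS : MeasurableSet S) (hμ0 : μ S ≠ 0) (hμS : μ S ≠ ⊤)
    {g : α → ℝ} (hg : IntegrableOn g S μ) {m : ℝ} (hm : ∀ x ∈ S, m ≤ g x) :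
    m ≤ ∫ x, g x * uniformDensity μ S x ∂μ := by
  rw [integral_mul_uniformDensity hS]
  exact (convex_Ici m).set_average_mem isClosed_Ici hμ0 hμS (ae_restrict_of_forall_mem hS hm) hg

lemma integral_mul_uniformDensity_le (hS : MeasurableSet S) (hμ0 : μ S ≠ 0) (hμS : μ S ≠ ⊤)
    {g : α → ℝ} (hg : IntegrableOn g S μ) {M : ℝ} (hM : ∀ x ∈ S, g x ≤ M) :
    ∫ x, g x * uniformDensity μ S x ∂μ ≤ M := by
  rw [integral_mul_uniformDensity hS]
  exact (convex_Iic M).set_average_mem isClosed_Iic hμ0 hμS (ae_restrict_of_forall_mem hS hM) hg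

end UniformDensity

section Gain
variable {s ℓ : ℕ}

lemma Ef_eq_integral_norm_sq (f : (Fin ℓ → ℝ) → ℝ) :
    Ef ℓ f = ∫ w, ‖toLp 2 w‖ ^ 2 * f w := by
  simp only [Ef, sum_sq_eq_norm_toLp_sq]

lemma RMS_eq_sqrt_integral_norm_sq (F : Matrix (Fin s) (Fin ℓ) ℝ) (f : (Fin ℓ → ℝ) → ℝ) :
    RMS F f = √((∫ w, ‖euclideanCLM F (toLp 2 w)‖ ^ 2 * f w) / Ef ℓ f) := by
  simp only [RMS, sum_mulVec_sq_eq_norm_sq]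

lemma RMS_le_norm_euclideanCLM (F : Matrix (Fin s) (Fin ℓ) ℝ) {f : (Fin ℓ → ℝ) → ℝ}
    (hf : IsGoodDensity ℓ f) : RMS F f ≤ ‖euclideanCLM F‖ := by
  set T := euclideanCLM F
  have hmoment : Integrable (fun w => ‖toLp 2 w‖ ^ 2 * f w) := by
    simpa only [sum_sq_eq_norm_toLp_sq] using hf.moment_integrable
  have hle : ∀ w, ‖T (toLp 2 w)‖ ^ 2 * f w ≤ ‖T‖ ^ 2 * (‖toLp 2 w‖ ^ 2 * f w) := fun w => by
    rw [← mul_assoc, ← mul_pow]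
    gcongr
    · exact hf.nonneg w
    · exact T.le_opNorm _
  have hint : Integrable fun w => ‖T (toLp 2 w)‖ ^ 2 * f w := by
    refine (hmoment.const_mul (‖T‖ ^ 2)).mono' ?_ (.of_forall fun w => ?_)
    · exact (by fun_prop : Continuous fun w => ‖T (toLp 2 w)‖ ^ 2).aestronglyMeasurable.mul
        hf.integrable.aestronglyMeasurable
    · rw [Real.norm_of_nonneg (mul_nonneg (sq_nonneg _) (hf.nonneg w))]
      exact hle w
  have hnum : ∫ w, ‖T (toLp 2 w)‖ ^ 2 * f w ≤ ‖T‖ ^ 2 * Ef ℓ f := by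
    rw [Ef_eq_integral_norm_sq, ← integral_const_mul]
    exact integral_mono hint (hmoment.const_mul _) hle
  rw [RMS_eq_sqrt_integral_norm_sq, ← sqrt_sq (norm_nonneg T)]
  exact sqrt_le_sqrt ((div_le_iff₀ hf.moment_pos).2 hnum)

end Gain

section Cube
variable {s ℓ : ℕ}

/-- `Fin ℓ → ℝ` carries the sup metric, so this is the uniform density on the cube
`∏ i, [c i - 1, c i + 1]`. -/
noncomputable def cubeDensity (c : Fin ℓ → ℝ) : (Fin ℓ → ℝ) → ℝ :=
  uniformDensity volume (Metric.closedBall c 1)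

lemma volume_closedBall_one_ne_zero (c : Fin ℓ → ℝ) : volume (Metric.closedBall c 1) ≠ 0 := by
  simp [Real.volume_pi_closedBall c zero_le_one]

lemma volume_closedBall_one_ne_top (c : Fin ℓ → ℝ) : volume (Metric.closedBall c 1) ≠ ⊤ := by
  simp [Real.volume_pi_closedBall c zero_le_one]

lemma norm_toLp_sub_le_sqrt {c w : Fin ℓ → ℝ} (hw : w ∈ Metric.closedBall c 1) :
    ‖toLp 2 w - toLp 2 c‖ ≤ √ℓ := by
  simpa using norm_toLp_sub_le w c |>.trans (mul_le_of_le_one_right (sqrt_nonneg _) hw)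

lemma le_integral_mul_cubeDensity {c : Fin ℓ → ℝ} {g : (Fin ℓ → ℝ) → ℝ} (hg : Continuous g)
    {m : ℝ} (hm : ∀ w ∈ Metric.closedBall c 1, m ≤ g w) : m ≤ ∫ w, g w * cubeDensity c w :=
  le_integral_mul_uniformDensity Metric.isClosed_closedBall.measurableSet
    (volume_closedBall_one_ne_zero c) (volume_closedBall_one_ne_top c)
    (hg.continuousOn.integrableOn_compact (isCompact_closedBall c 1)) hm

lemma integral_mul_cubeDensity_le {c : Fin ℓ → ℝ} {g : (Fin ℓ → ℝ) → ℝ} (hg : Continuous g)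
    {M : ℝ} (hM : ∀ w ∈ Metric.closedBall c 1, g w ≤ M) : ∫ w, g w * cubeDensity c w ≤ M :=
  integral_mul_uniformDensity_le Metric.isClosed_closedBall.measurableSet
    (volume_closedBall_one_ne_zero c) (volume_closedBall_one_ne_top c)
    (hg.continuousOn.integrableOn_compact (isCompact_closedBall c 1)) hM

lemma sq_sub_sqrt_le_Ef_cubeDensity {c : Fin ℓ → ℝ} (hc : √ℓ ≤ ‖toLp 2 c‖) :
    (‖toLp 2 c‖ - √ℓ) ^ 2 ≤ Ef ℓ (cubeDensity c) := by
  rw [Ef_eq_integral_norm_sq]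
  refine le_integral_mul_cubeDensity (by fun_prop) fun w hw => ?_
  have := norm_sub_norm_le (toLp 2 c) (toLp 2 w)
  rw [norm_sub_rev] at this
  gcongr
  linarith [norm_toLp_sub_le_sqrt hw]

lemma Ef_cubeDensity_le_sq_add_sqrt (c : Fin ℓ → ℝ) :
    Ef ℓ (cubeDensity c) ≤ (‖toLp 2 c‖ + √ℓ) ^ 2 := by
  rw [Ef_eq_integral_norm_sq]
  refine integral_mul_cubeDensity_le (by fun_prop) fun w hw => ?_
  have := norm_le_norm_add_norm_sub' (toLp 2 w) (toLp 2 c)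
  gcongr
  linarith [norm_toLp_sub_le_sqrt hw]

lemma isGoodDensity_cubeDensity {c : Fin ℓ → ℝ} (hc : √ℓ < ‖toLp 2 c‖) :
    IsGoodDensity ℓ (cubeDensity c) where
  nonneg := uniformDensity_nonneg
  integrable := integrable_uniformDensity Metric.isClosed_closedBall.measurableSet
    (volume_closedBall_one_ne_top c)
  total := integral_uniformDensity Metric.isClosed_closedBall.measurableSet
    (volume_closedBall_one_ne_zero c) (volume_closedBall_one_ne_top c)
  moment_integrable := integrable_mul_uniformDensity Metric.isClosed_closedBall.measurableSet
    ((by fun_prop : Continuous fun w : Fin ℓ → ℝ => ∑ i, w i ^ 2).continuousOn.integrableOn_compact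
      (isCompact_closedBall c 1))
  moment_pos := (pow_pos (sub_pos.2 hc) 2).trans_le (sq_sub_sqrt_le_Ef_cubeDensity hc.le)
  entropy_integrable := integrable_uniformDensity_mul_log
    Metric.isClosed_closedBall.measurableSet (volume_closedBall_one_ne_top c)

lemma le_RMS_cubeDensity (F : Matrix (Fin s) (Fin ℓ) ℝ) {c : Fin ℓ → ℝ} (hc : √ℓ < ‖toLp 2 c‖) :
    (‖euclideanCLM F (toLp 2 c)‖ - ‖euclideanCLM F‖ * √ℓ) / (‖toLp 2 c‖ + √ℓ) ≤
      RMS F (cubeDensity c) := by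
  set T := euclideanCLM F
  set m := ‖T (toLp 2 c)‖ - ‖T‖ * √ℓ
  have hM : 0 < ‖toLp 2 c‖ + √ℓ := by linarith [sqrt_nonneg (ℓ : ℝ)]
  rcases le_or_gt m 0 with hm | hm
  · exact (div_nonpos_of_nonpos_of_nonneg hm hM.le).trans (sqrt_nonneg _)
  have hnum : m ^ 2 ≤ ∫ w, ‖T (toLp 2 w)‖ ^ 2 * cubeDensity c w := by
    refine le_integral_mul_cubeDensity (by fun_prop) fun w hw => ?_
    have hTw : ‖T (toLp 2 c)‖ - ‖T (toLp 2 w)‖ ≤ ‖T‖ * √ℓ := calc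
      _ ≤ ‖T (toLp 2 w - toLp 2 c)‖ := by rw [map_sub, norm_sub_rev]; exact norm_sub_norm_le _ _
      _ ≤ ‖T‖ * ‖toLp 2 w - toLp 2 c‖ := T.le_opNorm _
      _ ≤ ‖T‖ * √ℓ := by gcongr; exact norm_toLp_sub_le_sqrt hw
    gcongr
    linarith
  have hden := Ef_cubeDensity_le_sq_add_sqrt c
  rw [RMS_eq_sqrt_integral_norm_sq, ← sqrt_sq (div_nonneg hm.le hM.le), div_pow]
  exact sqrt_le_sqrt (div_le_div₀ ((sq_nonneg m).trans hnum) hnum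
    (isGoodDensity_cubeDensity hc).moment_pos hden)

end Cube

lemma tendsto_mul_sub_div_add_atTop (t a b : ℝ) :
    Tendsto (fun R => (R * t - a) / (R + b)) atTop (𝓝 t) := by
  have hlim : Tendsto (fun R : ℝ => (t - a * R⁻¹) / (1 + b * R⁻¹)) atTop
      (𝓝 ((t - a * 0) / (1 + b * 0))) :=
    (tendsto_const_nhds.sub (tendsto_inv_atTop_zero.const_mul a)).div
      (tendsto_const_nhds.add (tendsto_inv_atTop_zero.const_mul b)) (by simp)
  simp only [mul_zero, sub_zero, add_zero, div_one] at hlim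
  refine hlim.congr' ((eventually_gt_atTop 0).mono fun R hR => ?_)
  field_simp

section Anorm
variable {s ℓ : ℕ} (F : Matrix (Fin s) (Fin ℓ) ℝ)

lemma RMS_le_sigmaMax {f : (Fin ℓ → ℝ) → ℝ} (hf : IsGoodDensity ℓ f) : RMS F f ≤ sigmaMax F :=
  sigmaMax_eq_opNorm F ▸ RMS_le_norm_euclideanCLM F hf

lemma exists_isGoodDensity_lt_RMS {u : EuclideanSpace ℝ (Fin ℓ)} (hu : ‖u‖ = 1) {y : ℝ}
    (hy : y < ‖euclideanCLM F u‖) :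
    ∃ f, IsGoodDensity ℓ f ∧ y < RMS F f := by
  set T := euclideanCLM F
  have hlim := tendsto_mul_sub_div_add_atTop ‖T u‖ (‖T‖ * √ℓ) √ℓ
  obtain ⟨R, hRy, hR⟩ :=
    ((hlim.eventually (lt_mem_nhds hy)).and (eventually_gt_atTop √ℓ)).exists
  have hR0 : 0 ≤ R := (sqrt_nonneg _).trans hR.le
  have hc : ‖toLp 2 (ofLp (R • u))‖ = R := by simp [norm_smul, hu, abs_of_nonneg hR0]
  have hcR : √ℓ < ‖toLp 2 (ofLp (R • u))‖ := hc.symm ▸ hR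
  refine ⟨cubeDensity (ofLp (R • u)), isGoodDensity_cubeDensity hcR, hRy.trans_le ?_⟩
  simpa [hc, norm_smul, abs_of_nonneg hR0, mul_comm] using le_RMS_cubeDensity F hcR

lemma anorm_nonneg (a : ℝ) : 0 ≤ anorm a F :=
  Real.sSup_nonneg (by rintro _ ⟨f, -, -, rfl⟩; exact sqrt_nonneg _)

lemma anorm_le_sigmaMax (a : ℝ) : anorm a F ≤ sigmaMax F :=
  Real.sSup_le (by rintro _ ⟨f, hf, -, rfl⟩; exact RMS_le_sigmaMax F hf)
    (sigmaMax_eq_opNorm F ▸ norm_nonneg _)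

lemma RMS_le_anorm {f : (Fin ℓ → ℝ) → ℝ} (hf : IsGoodDensity ℓ f) {a : ℝ} (ha : aniso ℓ f ≤ a) :
    RMS F f ≤ anorm a F :=
  le_csSup ⟨sigmaMax F, by rintro _ ⟨f, hf, -, rfl⟩; exact RMS_le_sigmaMax F hf⟩ ⟨f, hf, ha, rfl⟩

lemma anorm_mono : Monotone fun a => anorm a F := fun _ _ hab =>
  Real.sSup_le (by rintro _ ⟨f, hf, ha, rfl⟩; exact RMS_le_anorm F hf (ha.trans hab))
    (anorm_nonneg F _)

lemma eventually_lt_anorm {y : ℝ} (hy : y < sigmaMax F) : ∀ᶠ a in atTop, y < anorm a F := by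
  rcases lt_or_ge y 0 with hy0 | hy0
  · exact .of_forall fun a => hy0.trans_le (anorm_nonneg F a)
  rw [sigmaMax_eq_opNorm, ← (euclideanCLM F).sSup_sphere_eq_norm] at hy
  have hne : ((fun u => ‖euclideanCLM F u‖) '' Metric.sphere 0 1).Nonempty :=
    (Set.eq_empty_or_nonempty _).resolve_left fun h => by simp [h] at hy; linarith
  obtain ⟨_, ⟨u, hu, rfl⟩, hyu⟩ := exists_lt_of_lt_csSup hne hy
  obtain ⟨f, hf, hyf⟩ := exists_isGoodDensity_lt_RMS F (mem_sphere_zero_iff_norm.1 hu) hyu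
  exact (eventually_ge_atTop (aniso ℓ f)).mono fun a ha => hyf.trans_le (RMS_le_anorm F hf ha)

lemma tendsto_anorm_atTop : Tendsto (fun a => anorm a F) atTop (𝓝 (sigmaMax F)) :=
  tendsto_order.2 ⟨fun _ hy => eventually_lt_anorm F hy,
    fun _ hy => .of_forall fun a => (anorm_le_sigmaMax F a).trans_lt hy⟩

end Anorm

theorem anorm_monotone_bounded_tendsto_general
    (s ℓ : ℕ) (F : Matrix (Fin s) (Fin ℓ) ℝ) :
    (∀ a b : ℝ, 0 ≤ a → a ≤ b → anorm a F ≤ anorm b F) ∧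
    (∀ a : ℝ, 0 ≤ a → anorm a F ≤ sigmaMax F) ∧
    Filter.Tendsto (fun a : ℝ => anorm a F) Filter.atTop (nhds (sigmaMax F)) :=
  ⟨fun _ _ _ hab => anorm_mono F hab, fun a _ => anorm_le_sigmaMax F a, tendsto_anorm_atTop F⟩

/-- The map `a ↦ ⦀F⦀_a` is nondecreasing on `[0,∞)`, bounded above by the largest
singular value `σ_max(F)`, and converges to `σ_max(F)` as `a → +∞`. -/
theorem anorm_monotone_bounded_tendsto
    (s ℓ : ℕ) (hℓ : 1 ≤ ℓ) (F : Matrix (Fin s) (Fin ℓ) ℝ) :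
    (∀ a b : ℝ, 0 ≤ a → a ≤ b → anorm a F ≤ anorm b F) ∧
    (∀ a : ℝ, 0 ≤ a → anorm a F ≤ sigmaMax F) ∧
    Filter.Tendsto (fun a : ℝ => anorm a F) Filter.atTop (nhds (sigmaMax F)) :=
  anorm_monotone_bounded_tendsto_general s ℓ F
end

section
/- State-space criterion of outerness: assuming r ≤ m, the system is outer on [0,N], i.e. F_{0:N}·F_{0:N}ᵀ = I_{r(N+1)}, if and only if for every k = 0,…,N both C_k P_k C_kᵀ + D_k D_kᵀ = I_r and Q_{k+1}·(A_k P_k C_kᵀ + B_k D_kᵀ) = 0 hold. -/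
open MeasureTheory Real Matrix

/-- State transition matrix `Φ_{j,k} = A_{j−1}···A_k` (with `Φ_{k,k} = I`). -/
noncomputable def Phi {n : ℕ} (A : ℕ → Matrix (Fin n) (Fin n) ℝ) : ℕ → ℕ → Matrix (Fin n) (Fin n) ℝ
  | 0, _ => 1
  | j + 1, k => if j + 1 ≤ k then 1 else A j * Phi A j k

/-- The block lower triangular matrix `F_{0:N}` of the system on `[0,N]`, with
`(j,k)` block `C_j Φ_{j,k+1} B_k` for `j > k`, `D_k` for `j = k`, and `0` otherwise. -/
noncomputable def Fsys {n m r : ℕ} (N : ℕ)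
    (A : ℕ → Matrix (Fin n) (Fin n) ℝ) (B : ℕ → Matrix (Fin n) (Fin m) ℝ)
    (C : ℕ → Matrix (Fin r) (Fin n) ℝ) (D : ℕ → Matrix (Fin r) (Fin m) ℝ) :
    Matrix (Fin (N + 1) × Fin r) (Fin (N + 1) × Fin m) ℝ :=
  Matrix.of fun jp ki =>
    if (ki.1 : ℕ) < (jp.1 : ℕ) then (C jp.1 * Phi A jp.1 (ki.1 + 1) * B ki.1) jp.2 ki.2
    else if (jp.1 : ℕ) = (ki.1 : ℕ) then D ki.1 jp.2 ki.2
    else 0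

/-- Controllability gramians `P_j = ∑_{k=0}^{j−1} Φ_{j,k+1} B_k B_kᵀ Φ_{j,k+1}ᵀ`. -/
noncomputable def Pgram {n m : ℕ}
    (A : ℕ → Matrix (Fin n) (Fin n) ℝ) (B : ℕ → Matrix (Fin n) (Fin m) ℝ)
    (j : ℕ) : Matrix (Fin n) (Fin n) ℝ :=
  ∑ k ∈ Finset.range j, Phi A j (k + 1) * B k * (B k)ᵀ * (Phi A j (k + 1))ᵀ

/-- Observability gramians `Q_k = ∑_{j=k}^{N} Φ_{j,k}ᵀ C_jᵀ C_j Φ_{j,k}`. -/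
noncomputable def Qgram {n r : ℕ} (N : ℕ)
    (A : ℕ → Matrix (Fin n) (Fin n) ℝ) (C : ℕ → Matrix (Fin r) (Fin n) ℝ)
    (k : ℕ) : Matrix (Fin n) (Fin n) ℝ :=
  ∑ j ∈ Finset.Icc k N, (Phi A j k)ᵀ * (C j)ᵀ * C j * Phi A j k

/-! ### Auxiliary lemmas -/

lemma Phi_stop {n : ℕ} (A : ℕ → Matrix (Fin n) (Fin n) ℝ) {j k : ℕ} (h : j ≤ k) :
    Phi A j k = 1 := by
  cases j with
  | zero => rfl
  | succ j => rw [Phi, if_pos h]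

lemma Phi_self {n : ℕ} (A : ℕ → Matrix (Fin n) (Fin n) ℝ) (k : ℕ) : Phi A k k = 1 :=
  Phi_stop A le_rfl

lemma Phi_succ {n : ℕ} (A : ℕ → Matrix (Fin n) (Fin n) ℝ) {j k : ℕ} (h : k ≤ j) :
    Phi A (j + 1) k = A j * Phi A j k := by
  rw [Phi, if_neg (by omega)]

lemma Phi_comp {n : ℕ} (A : ℕ → Matrix (Fin n) (Fin n) ℝ) {j l k : ℕ} (hk : k ≤ l) (hl : l ≤ j) :
    Phi A j k = Phi A j l * Phi A l k := by
  induction j, hl using Nat.le_induction with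
  | base => rw [Phi_self, one_mul]
  | succ j hj ih =>
    rw [Phi_succ A (hk.trans hj), Phi_succ A hj, ih, mul_assoc]

lemma sum_transpose_mul_self_eq_zero {a b : ℕ} {ι : Type*} (s : Finset ι)
    (Y : ι → Matrix (Fin a) (Fin b) ℝ)
    (h : ∑ j ∈ s, (Y j)ᵀ * Y j = 0) : ∀ j ∈ s, Y j = 0 := by
  intro j hj
  ext p q
  have hq := congrFun (congrFun h q) q
  simp only [Matrix.sum_apply, Matrix.mul_apply, Matrix.transpose_apply,
    Matrix.zero_apply] at hq
  have h1 : ∀ i ∈ s, (0:ℝ) ≤ ∑ p', Y i p' q * Y i p' q :=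
    fun i _ => Finset.sum_nonneg fun p' _ => mul_self_nonneg _
  have h2 := (Finset.sum_eq_zero_iff_of_nonneg h1).mp hq j hj
  have h3 : ∀ p' ∈ (Finset.univ : Finset (Fin a)), (0:ℝ) ≤ Y j p' q * Y j p' q :=
    fun p' _ => mul_self_nonneg _
  have h4 := (Finset.sum_eq_zero_iff_of_nonneg h3).mp h2 p (Finset.mem_univ p)
  simpa using mul_self_eq_zero.mp h4

lemma Qgram_mul_eq_zero_iff {n r : ℕ} (N : ℕ)
    (A : ℕ → Matrix (Fin n) (Fin n) ℝ) (C : ℕ → Matrix (Fin r) (Fin n) ℝ)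
    (l : ℕ) (X : Matrix (Fin n) (Fin r) ℝ) :
    Qgram N A C (l + 1) * X = 0 ↔
      ∀ j ∈ Finset.Icc (l + 1) N, C j * Phi A j (l + 1) * X = 0 := by
  constructor
  · intro h
    have h2 : Xᵀ * (Qgram N A C (l+1) * X) = 0 := by rw [h, Matrix.mul_zero]
    rw [Qgram, Matrix.sum_mul, Matrix.mul_sum] at h2
    have h3 : ∑ j ∈ Finset.Icc (l+1) N,
        (C j * Phi A j (l+1) * X)ᵀ * (C j * Phi A j (l+1) * X) = 0 := by
      rw [← h2]
      refine Finset.sum_congr rfl fun j hj => ?_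
      simp only [Matrix.transpose_mul, Matrix.mul_assoc]
    exact sum_transpose_mul_self_eq_zero _ _ h3
  · intro h
    rw [Qgram, Matrix.sum_mul]
    refine Finset.sum_eq_zero fun j hj => ?_
    have := h j hj
    calc (Phi A j (l+1))ᵀ * (C j)ᵀ * C j * Phi A j (l+1) * X
        = (Phi A j (l+1))ᵀ * (C j)ᵀ * (C j * Phi A j (l+1) * X) := by
          simp only [Matrix.mul_assoc]
      _ = 0 := by rw [this, Matrix.mul_zero]

section Blocks

variable {n m r : ℕ} (N : ℕ)
    (A : ℕ → Matrix (Fin n) (Fin n) ℝ) (B : ℕ → Matrix (Fin n) (Fin m) ℝ)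
    (C : ℕ → Matrix (Fin r) (Fin n) ℝ) (D : ℕ → Matrix (Fin r) (Fin m) ℝ)

noncomputable def gblk (j k : ℕ) : Matrix (Fin r) (Fin m) ℝ :=
  if k < j then C j * Phi A j (k + 1) * B k else if j = k then D k else 0

noncomputable def Tblk (j l : ℕ) : Matrix (Fin r) (Fin r) ℝ :=
  ∑ k ∈ Finset.range (N + 1), gblk A B C D j k * (gblk A B C D l k)ᵀ

lemma Fsys_apply (jp : Fin (N+1) × Fin r) (ki : Fin (N+1) × Fin m) :
    Fsys N A B C D jp ki = gblk A B C D (jp.1 : ℕ) (ki.1 : ℕ) jp.2 ki.2 := by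
  rw [Fsys, gblk]
  simp only [Matrix.of_apply]
  split_ifs <;> simp

lemma gblk_eq_zero {j k : ℕ} (h : j < k) : gblk A B C D j k = 0 := by
  rw [gblk, if_neg (by omega), if_neg (by omega)]

lemma mulT_entry (j l : Fin (N+1)) (p q : Fin r) :
    (Fsys N A B C D * (Fsys N A B C D)ᵀ) (j, p) (l, q) = Tblk N A B C D (j : ℕ) (l : ℕ) p q := by
  rw [Matrix.mul_apply, Tblk, Matrix.sum_apply]
  rw [Fintype.sum_prod_type]
  rw [← Fin.sum_univ_eq_sum_range
    (fun k => (gblk A B C D (j:ℕ) k * (gblk A B C D (l:ℕ) k)ᵀ) p q)]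
  refine Finset.sum_congr rfl fun k _ => ?_
  rw [Matrix.mul_apply]
  refine Finset.sum_congr rfl fun i _ => ?_
  rw [Matrix.transpose_apply, Fsys_apply, Fsys_apply, Matrix.transpose_apply]

lemma one_entry (j l : Fin (N+1)) (p q : Fin r) :
    (1 : Matrix (Fin (N+1) × Fin r) (Fin (N+1) × Fin r) ℝ) (j, p) (l, q)
      = (if (j : ℕ) = (l : ℕ) then (1 : Matrix (Fin r) (Fin r) ℝ) else 0) p q := by
  by_cases h : (j : ℕ) = (l : ℕ)
  · have : j = l := Fin.val_injective h
    subst this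
    rw [if_pos rfl, Matrix.one_apply, Matrix.one_apply]
    simp [Prod.ext_iff]
  · rw [if_neg h, Matrix.one_apply_ne (by simp [Prod.ext_iff, Fin.val_eq_val] at *; tauto)]
    simp

lemma outer_iff_blocks :
    Fsys N A B C D * (Fsys N A B C D)ᵀ = 1 ↔
      ∀ j l : ℕ, j ≤ N → l ≤ N →
        Tblk N A B C D j l = if j = l then 1 else 0 := by
  constructor
  · intro h j l hj hl
    ext p q
    have h1 := congrFun (congrFun h (⟨j, by omega⟩, p)) ((⟨l, by omega⟩ : Fin (N+1)), q)
    rw [mulT_entry, one_entry] at h1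
    exact h1
  · intro h
    ext ⟨j, p⟩ ⟨l, q⟩
    rw [mulT_entry, one_entry, h (j : ℕ) (l : ℕ) j.is_le l.is_le]

lemma Tblk_reduce {j l : ℕ} (hl : l ≤ N) :
    Tblk N A B C D j l = ∑ k ∈ Finset.range (l + 1), gblk A B C D j k * (gblk A B C D l k)ᵀ := by
  rw [Tblk]
  symm
  refine Finset.sum_subset (Finset.range_subset_range.mpr (by omega)) fun k _ hk => ?_
  rw [show gblk A B C D l k = 0 from gblk_eq_zero A B C D (by simp at hk; omega),
    Matrix.transpose_zero, Matrix.mul_zero]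

lemma gblk_diag (l : ℕ) : gblk A B C D l l = D l := by
  rw [gblk, if_neg (lt_irrefl l), if_pos rfl]

lemma gblk_lt {k l : ℕ} (h : k < l) : gblk A B C D l k = C l * Phi A l (k + 1) * B k := by
  rw [gblk, if_pos h]

lemma Tblk_diag {l : ℕ} (hl : l ≤ N) :
    Tblk N A B C D l l = C l * Pgram A B l * (C l)ᵀ + D l * (D l)ᵀ := by
  rw [Tblk_reduce N A B C D hl, Finset.sum_range_succ, gblk_diag]
  congr 1
  rw [Pgram, Matrix.mul_sum, Matrix.sum_mul]
  refine Finset.sum_congr rfl fun k hk => ?_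
  rw [gblk_lt A B C D (Finset.mem_range.mp hk)]
  simp only [Matrix.transpose_mul, Matrix.mul_assoc]

lemma Tblk_off {j l : ℕ} (hlj : l < j) (hj : j ≤ N) :
    Tblk N A B C D j l
      = C j * Phi A j (l + 1) * (A l * Pgram A B l * (C l)ᵀ + B l * (D l)ᵀ) := by
  rw [Tblk_reduce N A B C D (by omega), Finset.sum_range_succ, gblk_diag,
    gblk_lt A B C D hlj]
  simp only [Matrix.mul_add, Pgram, Matrix.mul_sum, Matrix.sum_mul]
  congr 1
  · refine Finset.sum_congr rfl fun k hk => ?_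
    have hkl := Finset.mem_range.mp hk
    rw [gblk_lt A B C D (by omega), gblk_lt A B C D hkl]
    rw [Phi_comp A (k := k + 1) (l := l + 1) (by omega) (by omega),
      Phi_succ A (by omega : k + 1 ≤ l)]
    simp only [Matrix.transpose_mul, Matrix.mul_assoc]
  · simp only [Matrix.mul_assoc]

lemma Tblk_symm (j l : ℕ) : Tblk N A B C D l j = (Tblk N A B C D j l)ᵀ := by
  rw [Tblk, Tblk, Matrix.transpose_sum]
  refine Finset.sum_congr rfl fun k _ => ?_
  rw [Matrix.transpose_mul, Matrix.transpose_transpose]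

end Blocks

/-- State-space criterion of outerness: assuming `r ≤ m`, the system is outer on
`[0,N]`, i.e. `F_{0:N} F_{0:N}ᵀ = I`, iff for every `k = 0,…,N` both
`C_k P_k C_kᵀ + D_k D_kᵀ = I_r` and `Q_{k+1}(A_k P_k C_kᵀ + B_k D_kᵀ) = 0`. -/
theorem outerness_criterion
    (n m r N : ℕ) (hn : 0 < n) (hm : 0 < m) (hr : 0 < r) (hrm : r ≤ m)
    (A : ℕ → Matrix (Fin n) (Fin n) ℝ) (B : ℕ → Matrix (Fin n) (Fin m) ℝ)
    (C : ℕ → Matrix (Fin r) (Fin n) ℝ) (D : ℕ → Matrix (Fin r) (Fin m) ℝ) :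
    Fsys N A B C D * (Fsys N A B C D)ᵀ = 1 ↔
      ∀ k ≤ N, C k * Pgram A B k * (C k)ᵀ + D k * (D k)ᵀ = 1 ∧
        Qgram N A C (k + 1) * (A k * Pgram A B k * (C k)ᵀ + B k * (D k)ᵀ) = 0 := by
  rw [outer_iff_blocks]
  constructor
  · intro h k hk
    constructor
    · have h1 := h k k hk hk
      rw [if_pos rfl, Tblk_diag N A B C D hk] at h1
      exact h1
    · rw [Qgram_mul_eq_zero_iff]
      intro j hj
      rw [Finset.mem_Icc] at hj
      have h1 := h j k (by omega) hk
      rw [if_neg (by omega), Tblk_off N A B C D (by omega) (by omega)] at h1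
      exact h1
  · intro h j l hj hl
    rcases lt_trichotomy l j with hlt | heq | hgt
    · rw [if_neg (by omega), Tblk_off N A B C D hlt hj]
      have h2 := (h l hl).2
      rw [Qgram_mul_eq_zero_iff] at h2
      exact h2 j (Finset.mem_Icc.mpr ⟨by omega, hj⟩)
    · rw [heq, if_pos rfl, Tblk_diag N A B C D hj]
      exact (h j hj).1
    · rw [if_neg (by omega), Tblk_symm, Tblk_off N A B C D hgt hl]
      have h2 := (h j hj).2
      rw [Qgram_mul_eq_zero_iff] at h2
      rw [h2 l (Finset.mem_Icc.mpr ⟨by omega, hl⟩), Matrix.transpose_zero]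
end
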